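/- If a connected compact Hausdorff space X admits a Darboux injection f : X → S¹ into the circle, then X is locally connected. -/

import Mathlib

/-!
A Darboux injection `g` from a connected T₁ space `X` into a linear order is continuous: if
`s = g x₀` lies strictly between two values of `g`, then `X \ {x₀}` splits into disjoint open sets
`U, V`, the closed sets `Uᶜ, Vᶜ` are connected and meet only in `x₀`, so their images are intervals
meeting only in `s`; this forces `{g < s}` to be a union of some of `U, V`.
A Darboux injection into `S¹` is continuous on every connected set whose image misses a point `p`,
by composing with a chart `S¹ \ {p} ≃ ℝ`, and splitting `X` at a point as before covers it by two
such sets. A continuous injection of a compact space is an embedding, onto either `S¹` or a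
connected subset of `S¹ \ {p} ≃ ℝ`, and both are locally connected.
-/

open Set Function Topology

def IsDarboux {X Y : Type*} [TopologicalSpace X] [TopologicalSpace Y] (f : X → Y) : Prop :=
  ∀ C : Set X, IsPreconnected C → IsPreconnected (f '' C)

namespace IsDarboux

variable {X Y Z : Type*} [TopologicalSpace X] [TopologicalSpace Y] [TopologicalSpace Z]
  {f : X → Y}

theorem comp_continuousOn (hf : IsDarboux f) {g : Y → Z} (hg : ContinuousOn g (range f)) :
    IsDarboux (g ∘ f) := fun C hC => by
  rw [image_comp]
  exact (hf C hC).image g (hg.mono (image_subset_range f C))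

theorem domRestrict (hf : IsDarboux f) (s : Set X) : IsDarboux (s.domRestrict f) := by
  intro C hC
  rw [domRestrict_eq, image_comp]
  exact hf _ (hC.image _ continuous_subtype_val.continuousOn)

end IsDarboux

section

variable {X : Type*} [TopologicalSpace X]

theorem IsOpen.exists_partition_of_not_isPreconnected {s : Set X} (hs : IsOpen s)
    (h : ¬IsPreconnected s) :
    ∃ U V : Set X, IsOpen U ∧ IsOpen V ∧ U.Nonempty ∧ V.Nonempty ∧ Disjoint U V ∧ U ∪ V = s := by
  simp only [IsPreconnected, not_forall, not_nonempty_iff_eq_empty] at h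
  obtain ⟨u, v, hu, hv, hsuv, hsu, hsv, huv⟩ := h
  refine ⟨s ∩ u, s ∩ v, hs.inter hu, hs.inter hv, hsu, hsv, ?_, ?_⟩
  · exact disjoint_left.mpr fun y hyu hyv => huv.subset ⟨hyu.1, hyu.2, hyv.2⟩
  · rw [← inter_union_distrib_left, inter_eq_left.mpr hsuv]

theorem IsClosed.isPreconnected_of_isOpen_diff_singleton [PreconnectedSpace X] {F : Set X}
    {x : X} (hF : IsClosed F) (hx : x ∈ F) (hFx : IsOpen (F \ {x})) : IsPreconnected F := by
  have key : ∀ A B : Set X, IsClosed A → IsClosed B → F ⊆ A ∪ B → Disjoint A B → x ∈ A →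
      F ⊆ A := by
    intro A B hA hB hFAB hAB hxA
    have hFB : F ∩ B = (F \ {x}) \ A := by
      ext y
      constructor
      · rintro ⟨hyF, hyB⟩
        exact ⟨⟨hyF, fun hyx => hAB.notMem_of_mem_left (hyx ▸ hxA) hyB⟩,
          hAB.notMem_of_mem_right hyB⟩
      · rintro ⟨⟨hyF, -⟩, hyA⟩
        exact ⟨hyF, (hFAB hyF).resolve_left hyA⟩
    rcases isClopen_iff.mp ⟨hF.inter hB, hFB ▸ hFx.sdiff hA⟩ with hempty | huniv
    · intro y hy
      exact (hFAB hy).resolve_right fun hyB => (hempty.subset ⟨hy, hyB⟩ :)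
    · exact absurd (huniv.symm.subset (mem_univ x)).2 (hAB.notMem_of_mem_left hxA)
  rw [isPreconnected_iff_subset_of_fully_disjoint_closed hF]
  intro A B hA hB hFAB hAB
  rcases hFAB hx with hxA | hxB
  · exact Or.inl (key A B hA hB hFAB hAB hxA)
  · exact Or.inr (key B A hB hA (union_comm A B ▸ hFAB) hAB.symm hxB)

theorem isPreconnected_compl_of_union_eq_compl_singleton [PreconnectedSpace X] {U V : Set X}
    {x : X} (hU : IsOpen U) (hV : IsOpen V) (hUV : Disjoint U V) (h : U ∪ V = {x}ᶜ) :
    IsPreconnected Vᶜ := by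
  have hxV : x ∉ V := fun hx => h.subset (Or.inr hx) rfl
  refine hV.isClosed_compl.isPreconnected_of_isOpen_diff_singleton hxV ?_
  convert hU using 1
  rw [sdiff_eq, ← h, inter_union_distrib_left, compl_inter_self, union_empty,
    inter_eq_right.mpr hUV.subset_compl_right]

theorem Function.Injective.continuous_of_continuousOn_of_notMem_image {Y : Type*}
    [PreconnectedSpace X] [T1Space X] [TopologicalSpace Y] {f : X → Y}
    (hinj : Injective f) (h : ∀ A : Set X, IsPreconnected A → ∀ p, p ∉ f '' A → ContinuousOn f A) :
    Continuous f := by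
  rw [continuous_iff_continuousAt]
  intro z
  rcases subsingleton_or_nontrivial X with hX | hX
  · exact continuous_of_discreteTopology.continuousAt
  obtain ⟨x, hxz⟩ := exists_ne z
  by_cases hc : IsPreconnected ({x}ᶜ : Set X)
  · exact (h _ hc (f x) fun hfx => hinj.mem_set_image.mp hfx rfl).continuousAt
      (isOpen_compl_singleton.mem_nhds hxz.symm)
  -- otherwise `X` is the union of two closed preconnected sets meeting only at `x`
  obtain ⟨U, V, hU, hV, ⟨u, hu⟩, ⟨v, hv⟩, hUV, hcover⟩ :=
    isOpen_compl_singleton.exists_partition_of_not_isPreconnected hc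
  have hVc := h _ (isPreconnected_compl_of_union_eq_compl_singleton hU hV hUV hcover) (f v)
    fun hfv => hinj.mem_set_image.mp hfv hv
  have hUc := h _ (isPreconnected_compl_of_union_eq_compl_singleton hV hU hUV.symm
    (union_comm U V ▸ hcover)) (f u) fun hfu => hinj.mem_set_image.mp hfu hu
  have hcont := hVc.union_of_isClosed hUc hV.isClosed_compl hU.isClosed_compl
  rw [← compl_inter, hUV.symm.inter_eq, compl_empty] at hcont
  exact (continuousOn_univ.mp hcont).continuousAt

end

theorem Set.OrdConnected.subset_singleton_of_inter_subset {α : Type*} [LinearOrder α]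
    {I J : Set α} {a b s : α} (hI : I.OrdConnected) (hJ : J.OrdConnected) (hsJ : s ∈ J)
    (hIJ : I ∩ J ⊆ {s}) (ha : a ∈ I) (hb : b ∈ I) (has : a < s) (hsb : s < b) : J ⊆ {s} := by
  intro t ht
  rcases lt_trichotomy t s with hts | rfl | hst
  · have hc : max a t ∈ I ∩ J :=
      ⟨hI.out ha hb ⟨le_max_left a t, max_le (has.trans hsb).le (hts.trans hsb).le⟩,
        hJ.out ht hsJ ⟨le_max_right a t, max_le has.le hts.le⟩⟩
    exact absurd (hIJ hc) (max_lt has hts).ne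
  · rfl
  · have hc : min b t ∈ I ∩ J :=
      ⟨hI.out ha hb ⟨le_min (has.trans hsb).le (has.trans hst).le, min_le_left b t⟩,
        hJ.out hsJ ht ⟨le_min hsb.le hst.le, min_le_right b t⟩⟩
    exact absurd (hIJ hc) (lt_min hsb hst).ne'

section

variable {X Y α : Type*} [TopologicalSpace X] [PreconnectedSpace X] [TopologicalSpace Y]
  [LinearOrder α] [TopologicalSpace α] [OrderClosedTopology α] {g : X → α}

theorem IsDarboux.subset_or_disjoint_preimage_Iio (hg : IsDarboux g) (hinj : Injective g)
    {U V : Set X} {x₀ : X} (hU : IsOpen U) (hV : IsOpen V) (hUV : Disjoint U V)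
    (hcover : U ∪ V = {x₀}ᶜ) (hVne : V.Nonempty) :
    U ⊆ g ⁻¹' Iio (g x₀) ∨ Disjoint U (g ⁻¹' Iio (g x₀)) := by
  rw [or_iff_not_imp_right, not_disjoint_iff]
  rintro ⟨a, haU, ha⟩ b hbU
  by_contra hb
  have hbx₀ : g b ≠ g x₀ := fun h => hcover.subset (Or.inl hbU) (hinj h)
  have hI :=
    (hg _ (isPreconnected_compl_of_union_eq_compl_singleton hU hV hUV hcover)).ordConnected
  have hJ := (hg _ (isPreconnected_compl_of_union_eq_compl_singleton hV hU hUV.symm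
    (union_comm U V ▸ hcover))).ordConnected
  have hIJ : g '' Vᶜ ∩ g '' Uᶜ ⊆ {g x₀} := by
    rw [← image_inter hinj, ← compl_union, union_comm, hcover, compl_compl, image_singleton]
  have hx₀U : x₀ ∈ Uᶜ := fun hx₀ => hcover.subset (Or.inl hx₀) rfl
  obtain ⟨v, hv⟩ := hVne
  have hJx₀ := hI.subset_singleton_of_inter_subset hJ (mem_image_of_mem g hx₀U) hIJ
    (mem_image_of_mem g (hUV.subset_compl_right haU))
    (mem_image_of_mem g (hUV.subset_compl_right hbU)) ha (lt_of_le_of_ne (not_lt.mp hb) hbx₀.symm)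
  exact hcover.subset (Or.inr hv) (hinj (hJx₀ (mem_image_of_mem g (hUV.subset_compl_left hv))))

theorem IsDarboux.isOpen_preimage_Iio [T1Space X] (hg : IsDarboux g) (hinj : Injective g)
    (s : α) : IsOpen (g ⁻¹' Iio s) := by
  rcases (g ⁻¹' Ioi s).eq_empty_or_nonempty with hS | ⟨b, hb⟩
  · have hT : g ⁻¹' Iio s = (g ⁻¹' {s})ᶜ := by
      ext y
      have hy : ¬s < g y := fun h => hS.subset h
      simp only [mem_preimage, mem_Iio, mem_compl_iff, mem_singleton_iff]
      exact ⟨ne_of_lt, fun h => lt_of_le_of_ne (not_lt.mp hy) h⟩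
    rw [hT]
    exact ((subsingleton_singleton.preimage hinj).isClosed).isOpen_compl
  rcases (g ⁻¹' Iio s).eq_empty_or_nonempty with hT | ⟨a, ha⟩
  · rw [hT]
    exact isOpen_empty
  obtain ⟨x₀, -, rfl⟩ : s ∈ g '' univ := (hg univ isPreconnected_univ).ordConnected.out
    (mem_image_of_mem g (mem_univ a)) (mem_image_of_mem g (mem_univ b)) ⟨le_of_lt ha, le_of_lt hb⟩
  have hsplit : ¬IsPreconnected ({x₀}ᶜ : Set X) := fun hc => by
    have hax₀ : a ≠ x₀ := fun h => (ne_of_lt ha) (congrArg g h)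
    have hbx₀ : b ≠ x₀ := fun h => (ne_of_gt hb) (congrArg g h)
    obtain ⟨y, hy, hyx₀⟩ := (hg _ hc).ordConnected.out (mem_image_of_mem g hax₀)
      (mem_image_of_mem g hbx₀) ⟨le_of_lt ha, le_of_lt hb⟩
    exact hy (hinj hyx₀)
  obtain ⟨U, V, hU, hV, hUne, hVne, hUV, hcover⟩ :=
    isOpen_compl_singleton.exists_partition_of_not_isPreconnected hsplit
  have hopen : ∀ W : Set X, IsOpen W → W ⊆ g ⁻¹' Iio (g x₀) ∨ Disjoint W (g ⁻¹' Iio (g x₀)) →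
      IsOpen (W ∩ g ⁻¹' Iio (g x₀)) := by
    rintro W hW (hsub | hdisj)
    · rwa [inter_eq_left.mpr hsub]
    · rw [hdisj.inter_eq]
      exact isOpen_empty
  have hT : g ⁻¹' Iio (g x₀) = U ∩ g ⁻¹' Iio (g x₀) ∪ V ∩ g ⁻¹' Iio (g x₀) := by
    rw [← union_inter_distrib_right, hcover, inter_eq_right.mpr]
    exact fun y hy hyx₀ => (ne_of_lt (hy : g y < g x₀)) (congrArg g hyx₀)
  rw [hT]
  exact (hopen U hU (hg.subset_or_disjoint_preimage_Iio hinj hU hV hUV hcover hVne)).union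
    (hopen V hV (hg.subset_or_disjoint_preimage_Iio hinj hV hU hUV.symm
      (union_comm U V ▸ hcover) hUne))

theorem IsDarboux.continuous_of_injective [T1Space X] [OrderTopology α] (hg : IsDarboux g)
    (hinj : Injective g) : Continuous g := by
  refine OrderTopology.continuous_iff.mpr fun s => ⟨?_, hg.isOpen_preimage_Iio hinj s⟩
  have hdual : IsDarboux (OrderDual.toDual ∘ g) :=
    hg.comp_continuousOn continuous_toDual.continuousOn
  exact hdual.isOpen_preimage_Iio (OrderDual.toDual.injective.comp hinj) (OrderDual.toDual s)

theorem IsDarboux.continuous_of_range_subset_source [T1Space X] [OrderTopology α] {f : X → Y}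
    (hf : IsDarboux f) (hinj : Injective f) (e : OpenPartialHomeomorph Y α)
    (he : range f ⊆ e.source) : Continuous f := by
  have hmem : ∀ x, f x ∈ e.source := fun x => he (mem_range_self x)
  have hg : Continuous (e ∘ f) :=
    (hf.comp_continuousOn (e.continuousOn.mono he)).continuous_of_injective
      fun a b h => hinj (e.injOn (hmem a) (hmem b) h)
  exact (continuous_congr fun x => e.left_inv (hmem x)).mp
    (e.continuousOn_symm.comp_continuous hg fun x => e.map_source (hmem x))

end

local notation "𝕊¹" => Metric.sphere (0 : EuclideanSpace ℝ (Fin 2)) 1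

theorem exists_openPartialHomeomorph_real_source_eq_compl (p : 𝕊¹) :
    ∃ e : OpenPartialHomeomorph 𝕊¹ ℝ, e.source = {p}ᶜ := by
  have : Fact (Module.finrank ℝ (EuclideanSpace ℝ (Fin 2)) = 1 + 1) := ⟨finrank_euclideanSpace_fin⟩
  exact ⟨(stereographic' 1 p).transHomeomorph
    (PiLp.equivOfUnique 2 ℝ fun _ : Fin 1 => ℝ).toHomeomorph, by simp⟩

theorem IsDarboux.continuous_of_injective_circle {X : Type*} [TopologicalSpace X]
    [PreconnectedSpace X] [T1Space X] {f : X → 𝕊¹} (hf : IsDarboux f) (hinj : Injective f) :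
    Continuous f := by
  refine hinj.continuous_of_continuousOn_of_notMem_image fun A hA p hp => ?_
  have : PreconnectedSpace A := Subtype.preconnectedSpace hA
  obtain ⟨e, he⟩ := exists_openPartialHomeomorph_real_source_eq_compl p
  rw [continuousOn_iff_continuous_domRestrict]
  refine (hf.domRestrict A).continuous_of_range_subset_source
    (injOn_iff_injective.mp hinj.injOn) e ?_
  rintro _ ⟨x, rfl⟩
  rw [he]
  exact fun hx => hp ⟨x, x.2, hx⟩

theorem locallyConnectedSpace_of_continuous_injective_real {X : Type*} [TopologicalSpace X]
    [CompactSpace X] [PreconnectedSpace X] {g : X → ℝ} (hg : Continuous g) (hinj : Injective g) :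
    LocallyConnectedSpace X := by
  have : LocallyPathConnectedSpace (range g) :=
    (isPreconnected_range hg).ordConnected.convex.locallyPathConnectedSpace
  exact (hg.isClosedEmbedding hinj).isEmbedding.toHomeomorph.locallyConnectedSpace

/-- If a connected compact Hausdorff space `X` admits a Darboux injection
`f : X → S¹` into the circle, then `X` is locally connected. -/
theorem locallyConnected_of_darboux_injection_to_circle {X : Type*} [TopologicalSpace X]
    [CompactSpace X] [ConnectedSpace X] [T2Space X]
    (f : X → (Metric.sphere (0 : EuclideanSpace ℝ (Fin 2)) 1))
    (hinj : Function.Injective f)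
    (hdarboux : ∀ C : Set X, IsPreconnected C → IsPreconnected (f '' C)) :
    LocallyConnectedSpace X := by
  have hf : Continuous f := IsDarboux.continuous_of_injective_circle hdarboux hinj
  by_cases hsurj : Surjective f
  · have : LocallyConnectedSpace 𝕊¹ :=
      ChartedSpace.locallyConnectedSpace (EuclideanSpace ℝ (Fin 1)) _
    exact (hf.homeoOfEquivCompactToT2 (f := .ofBijective f ⟨hinj, hsurj⟩)).locallyConnectedSpace
  obtain ⟨p, hp⟩ := not_forall.mp hsurj
  obtain ⟨e, he⟩ := exists_openPartialHomeomorph_real_source_eq_compl p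
  have hmem : ∀ x, f x ∈ e.source := fun x => he ▸ fun hx => hp ⟨x, hx⟩
  exact locallyConnectedSpace_of_continuous_injective_real (e.continuousOn.comp_continuous hf hmem)
    fun a b h => hinj (e.injOn (hmem a) (hmem b) h)
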